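/- For γ ∈ [0,2), the function w(z₁,z₂) = |z₁|^γ|z₂|² + (4/(2-γ)²)|z₁|^{2-γ} satisfies det(∂∂̄ w) = 1 at every point of ℂ² with z₁ ≠ 0. -/

import Mathlib

/-!
Write `t = |z₁|²`, `s = |z₂|²`, so that `w = A(t) s + B(t)` with `A(t) = t^{γ/2}` and
`B(t) = κ t^{1-γ/2}`, `κ = 4/(2-γ)²`. If `df = a dz₁ + b dz̄₁ + c dz₂ + d dz̄₂`, the Wirtinger
derivatives of `f` are `a, b, c, d`, so the chain rule gives `∂̄₁w = (A's + B') z₁` and `∂̄₂w = A z₂`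
near `z`. Differentiating once more, the complex Hessian is
`[(tA')' s + (tB')', A' z̄₁ z₂; A' z₁ z̄₂, A]`, with determinant `s (A (tA')' - A'² t) + A (tB')'`.
For the power `A = t^{γ/2}` the bracket vanishes, and `A (tB')' = κ (1 - γ/2)² = 1`.
-/

/-- Wirtinger derivative `∂/∂z₁`. -/
noncomputable def wd1 (f : ℂ × ℂ → ℂ) (z : ℂ × ℂ) : ℂ :=
  (fderiv ℝ f z (1, 0) - Complex.I * fderiv ℝ f z (Complex.I, 0)) / 2

/-- Wirtinger derivative `∂/∂z̄₁`. -/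
noncomputable def wd1b (f : ℂ × ℂ → ℂ) (z : ℂ × ℂ) : ℂ :=
  (fderiv ℝ f z (1, 0) + Complex.I * fderiv ℝ f z (Complex.I, 0)) / 2

/-- Wirtinger derivative `∂/∂z₂`. -/
noncomputable def wd2 (f : ℂ × ℂ → ℂ) (z : ℂ × ℂ) : ℂ :=
  (fderiv ℝ f z (0, 1) - Complex.I * fderiv ℝ f z (0, Complex.I)) / 2

/-- Wirtinger derivative `∂/∂z̄₂`. -/
noncomputable def wd2b (f : ℂ × ℂ → ℂ) (z : ℂ × ℂ) : ℂ :=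
  (fderiv ℝ f z (0, 1) + Complex.I * fderiv ℝ f z (0, Complex.I)) / 2

/-- The complex Hessian `(u_{i j̄})` of `f` at `z`. -/
noncomputable def cHess (f : ℂ × ℂ → ℂ) (z : ℂ × ℂ) : Matrix (Fin 2) (Fin 2) ℂ :=
  !![wd1 (wd1b f) z, wd1 (wd2b f) z; wd2 (wd1b f) z, wd2 (wd2b f) z]

/-- `w(z₁,z₂) = |z₁|^γ |z₂|² + (4/(2-γ)²)|z₁|^{2-γ}`. -/
noncomputable def w (γ : ℝ) (z : ℂ × ℂ) : ℝ :=
  (‖z.1‖) ^ γ * (‖z.2‖) ^ 2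
    + (4 / (2 - γ) ^ 2) * (‖z.1‖) ^ (2 - γ)

open Complex ComplexConjugate Filter Topology

noncomputable def wirtingerCLM (a b c d : ℂ) : ℂ × ℂ →L[ℝ] ℂ :=
  a • ContinuousLinearMap.fst ℝ ℂ ℂ + b • (conjCLE.toContinuousLinearMap ∘L .fst ℝ ℂ ℂ)
    + c • ContinuousLinearMap.snd ℝ ℂ ℂ + d • (conjCLE.toContinuousLinearMap ∘L .snd ℝ ℂ ℂ)

@[simp]
lemma wirtingerCLM_apply (a b c d : ℂ) (v : ℂ × ℂ) :
    wirtingerCLM a b c d v = a * v.1 + b * conj v.1 + c * v.2 + d * conj v.2 := by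
  simp [wirtingerCLM]

section WirtingerCalculus

variable {f g : ℂ × ℂ → ℂ} {z : ℂ × ℂ} {a b c d a' b' c' d' : ℂ}

lemma HasFDerivAt.wd1_eq (hf : HasFDerivAt f (wirtingerCLM a b c d) z) : wd1 f z = a := by
  simp only [wd1, hf.fderiv, wirtingerCLM_apply, map_one, map_zero, conj_I]
  linear_combination (b - a) / 2 * I_mul_I

lemma HasFDerivAt.wd1b_eq (hf : HasFDerivAt f (wirtingerCLM a b c d) z) : wd1b f z = b := by
  simp only [wd1b, hf.fderiv, wirtingerCLM_apply, map_one, map_zero, conj_I]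
  linear_combination (a - b) / 2 * I_mul_I

lemma HasFDerivAt.wd2_eq (hf : HasFDerivAt f (wirtingerCLM a b c d) z) : wd2 f z = c := by
  simp only [wd2, hf.fderiv, wirtingerCLM_apply, map_one, map_zero, conj_I]
  linear_combination (d - c) / 2 * I_mul_I

lemma HasFDerivAt.wd2b_eq (hf : HasFDerivAt f (wirtingerCLM a b c d) z) : wd2b f z = d := by
  simp only [wd2b, hf.fderiv, wirtingerCLM_apply, map_one, map_zero, conj_I]
  linear_combination (c - d) / 2 * I_mul_I

lemma hasFDerivAt_fst_wirtinger : HasFDerivAt (fun q : ℂ × ℂ => q.1) (wirtingerCLM 1 0 0 0) z :=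
  hasFDerivAt_fst.congr_fderiv (by ext v <;> simp)

lemma hasFDerivAt_snd_wirtinger : HasFDerivAt (fun q : ℂ × ℂ => q.2) (wirtingerCLM 0 0 1 0) z :=
  hasFDerivAt_snd.congr_fderiv (by ext v <;> simp)

lemma HasFDerivAt.add_wirtinger (hf : HasFDerivAt f (wirtingerCLM a b c d) z)
    (hg : HasFDerivAt g (wirtingerCLM a' b' c' d') z) :
    HasFDerivAt (fun q => f q + g q) (wirtingerCLM (a + a') (b + b') (c + c') (d + d')) z :=
  (hf.add hg).congr_fderiv (by ext v <;> simp <;> ring)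

lemma HasFDerivAt.mul_wirtinger (hf : HasFDerivAt f (wirtingerCLM a b c d) z)
    (hg : HasFDerivAt g (wirtingerCLM a' b' c' d') z) :
    HasFDerivAt (fun q => f q * g q) (wirtingerCLM (f z * a' + g z * a) (f z * b' + g z * b)
      (f z * c' + g z * c) (f z * d' + g z * d)) z :=
  (hf.mul hg).congr_fderiv (by ext v <;> simp <;> ring)

lemma hasFDerivAt_comp_norm_sq_fst {φ : ℝ → ℝ} {φ' : ℝ} (hφ : HasDerivAt φ φ' (‖z.1‖ ^ 2)) :
    HasFDerivAt (fun q : ℂ × ℂ => (φ (‖q.1‖ ^ 2) : ℂ))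
      (wirtingerCLM (φ' * conj z.1) (φ' * z.1) 0 0) z :=
  (hφ.ofReal_comp.hasFDerivAt.comp z hasFDerivAt_fst.norm_sq).congr_fderiv
    (by ext v <;> apply Complex.ext <;> simp [Complex.inner] <;> ring)

lemma hasFDerivAt_norm_sq_snd :
    HasFDerivAt (fun q : ℂ × ℂ => ((‖q.2‖ ^ 2 : ℝ) : ℂ)) (wirtingerCLM 0 0 (conj z.2) z.2) z :=
  (ofRealCLM.hasFDerivAt.comp z hasFDerivAt_snd.norm_sq).congr_fderiv
    (by ext v <;> apply Complex.ext <;> simp [Complex.inner] <;> ring)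

end WirtingerCalculus

lemma cHess_eq_of_eventuallyEq {f g₁ g₂ : ℂ × ℂ → ℂ} {z : ℂ × ℂ}
    (h₁ : wd1b f =ᶠ[𝓝 z] g₁) (h₂ : wd2b f =ᶠ[𝓝 z] g₂) :
    cHess f z = !![wd1 g₁ z, wd1 g₂ z; wd2 g₁ z, wd2 g₂ z] := by
  simp only [cHess, wd1, wd2, h₁.fderiv_eq, h₂.fderiv_eq]

noncomputable def radialQuadratic (A B : ℝ → ℝ) (q : ℂ × ℂ) : ℂ :=
  ((A (‖q.1‖ ^ 2) * ‖q.2‖ ^ 2 + B (‖q.1‖ ^ 2) : ℝ) : ℂ)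

lemma hasFDerivAt_radialQuadratic {A B : ℝ → ℝ} {a' b' : ℝ} {z : ℂ × ℂ}
    (hA : HasDerivAt A a' (‖z.1‖ ^ 2)) (hB : HasDerivAt B b' (‖z.1‖ ^ 2)) :
    HasFDerivAt (radialQuadratic A B)
      (wirtingerCLM ((a' * ‖z.2‖ ^ 2 + b' : ℝ) * conj z.1) ((a' * ‖z.2‖ ^ 2 + b' : ℝ) * z.1)
        (A (‖z.1‖ ^ 2) * conj z.2) (A (‖z.1‖ ^ 2) * z.2)) z := by
  have h := ((hasFDerivAt_comp_norm_sq_fst hA).mul_wirtinger hasFDerivAt_norm_sq_snd).add_wirtinger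
    (hasFDerivAt_comp_norm_sq_fst hB)
  unfold radialQuadratic
  push_cast
  convert h using 2 <;> push_cast <;> ring

section RadialQuadratic

variable {A A' B B' : ℝ → ℝ} {a'' b'' : ℝ} {z : ℂ × ℂ}
  (hA : ∀ᶠ x in 𝓝 (‖z.1‖ ^ 2), HasDerivAt A (A' x) x)
  (hB : ∀ᶠ x in 𝓝 (‖z.1‖ ^ 2), HasDerivAt B (B' x) x)
  (hA' : HasDerivAt A' a'' (‖z.1‖ ^ 2)) (hB' : HasDerivAt B' b'' (‖z.1‖ ^ 2))
include hA hB hA' hB'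

theorem cHess_radialQuadratic :
    cHess (radialQuadratic A B) z =
      !![(((a'' * ‖z.2‖ ^ 2 + b'') * ‖z.1‖ ^ 2 + A' (‖z.1‖ ^ 2) * ‖z.2‖ ^ 2 + B' (‖z.1‖ ^ 2) : ℝ) : ℂ),
          A' (‖z.1‖ ^ 2) * conj z.1 * z.2;
        A' (‖z.1‖ ^ 2) * z.1 * conj z.2, A (‖z.1‖ ^ 2)] := by
  have hnear : ∀ᶠ q in 𝓝 z, HasFDerivAt (radialQuadratic A B) _ q :=
    ((continuous_fst.norm.pow 2).continuousAt.eventually (hA.and hB)).mono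
      fun q hq => hasFDerivAt_radialQuadratic hq.1 hq.2
  rw [cHess_eq_of_eventuallyEq (g₁ := fun q => radialQuadratic A' B' q * q.1)
    (g₂ := fun q => (A (‖q.1‖ ^ 2) : ℂ) * q.2) (hnear.mono fun q hq => hq.wd1b_eq)
    (hnear.mono fun q hq => hq.wd2b_eq)]
  have hg₁ := (hasFDerivAt_radialQuadratic hA' hB').mul_wirtinger (hasFDerivAt_fst_wirtinger (z := z))
  have hg₂ := (hasFDerivAt_comp_norm_sq_fst hA.self_of_nhds).mul_wirtinger
    (hasFDerivAt_snd_wirtinger (z := z))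
  rw [hg₁.wd1_eq, hg₁.wd2_eq, hg₂.wd1_eq, hg₂.wd2_eq, radialQuadratic]
  ext i j
  fin_cases i <;> fin_cases j <;> simp [← mul_conj'] <;> ring

theorem det_cHess_radialQuadratic :
    (cHess (radialQuadratic A B) z).det =
      ((‖z.2‖ ^ 2 * (A (‖z.1‖ ^ 2) * (a'' * ‖z.1‖ ^ 2 + A' (‖z.1‖ ^ 2))
          - A' (‖z.1‖ ^ 2) ^ 2 * ‖z.1‖ ^ 2)
        + A (‖z.1‖ ^ 2) * (b'' * ‖z.1‖ ^ 2 + B' (‖z.1‖ ^ 2)) : ℝ) : ℂ) := by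
  rw [cHess_radialQuadratic hA hB hA' hB', Matrix.det_fin_two_of]
  push_cast
  simp only [← mul_conj']
  ring

end RadialQuadratic

lemma w_eq_radialQuadratic (γ : ℝ) :
    (fun p => ((w γ p : ℝ) : ℂ)) =
      radialQuadratic (fun x => x ^ (γ / 2)) (fun x => 4 / (2 - γ) ^ 2 * x ^ ((2 - γ) / 2)) := by
  funext q
  simp only [w, radialQuadratic, Real.rpow_div_two_eq_sqrt _ (sq_nonneg _),
    Real.sqrt_sq (norm_nonneg _)]

lemma eventually_hasDerivAt_rpow_const (p : ℝ) {t : ℝ} (ht : 0 < t) :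
    ∀ᶠ x in 𝓝 t, HasDerivAt (fun x => x ^ p) (p * x ^ (p - 1)) x :=
  (eventually_ne_nhds ht.ne').mono fun _ hx => Real.hasDerivAt_rpow_const (Or.inl hx)

theorem det_cHess_w (γ : ℝ) (hγ : γ ∈ Set.Ico (0 : ℝ) 2) (z : ℂ × ℂ) (h1 : z.1 ≠ 0) :
    (cHess (fun p => ((w γ p : ℝ) : ℂ)) z).det = 1 := by
  have ht : 0 < ‖z.1‖ ^ 2 := by positivity
  have hA := eventually_hasDerivAt_rpow_const (γ / 2) ht
  have hB := (eventually_hasDerivAt_rpow_const ((2 - γ) / 2) ht).mono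
    fun x hx => hx.const_mul (4 / (2 - γ) ^ 2)
  rw [w_eq_radialQuadratic, det_cHess_radialQuadratic hA hB
    ((Real.hasDerivAt_rpow_const (Or.inl ht.ne')).const_mul _)
    (((Real.hasDerivAt_rpow_const (Or.inl ht.ne')).const_mul _).const_mul _)]
  norm_cast
  generalize ‖z.1‖ ^ 2 = t at ht
  have hX : 0 < t ^ (γ / 2) := Real.rpow_pos_of_pos ht _
  have hcomplement : t ^ ((2 - γ) / 2) = t / t ^ (γ / 2) := by
    rw [eq_div_iff hX.ne', ← Real.rpow_add ht, show (2 - γ) / 2 + γ / 2 = 1 by ring, Real.rpow_one]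
  have h2γ : 2 - γ ≠ 0 := sub_ne_zero.2 hγ.2.ne'
  simp only [Real.rpow_sub_one ht.ne', hcomplement]
  field_simp
  ring
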